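/- arXiv:2509.08849 — 3 statements merged into one kernel-verified Lean document; each statement's English description precedes it below -/
import Mathlib

section
/- For p1 > 0 and uniform price p2 ~ U[0, 2p1], the contract (b1, R2) maximizing -R1 + b1 + (β/(2p1))·∫_{R2}^{2p1}(p2 - R2) dp2 subject to the zero-profit condition b1 = (1 - R2/(2p1))·R2 + (1/(2p1))·∫_0^{R2} p2 dp2 (with 0 ≤ R2 ≤ 2p1 and 0 < β < 1) is b1 = p1 and R2 = 2p1. -/
open MeasureTheory intervalIntegral

/-- For `p1 > 0` and uniform price `p2 ~ U[0, 2p1]`, the contract `(b1, R2)` maximizing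
`-R1 + b1 + (β/(2p1))·∫_{R2}^{2p1}(p2 - R2) dp2` subject to the zero-profit condition
`b1 = (1 - R2/(2p1))·R2 + (1/(2p1))·∫_0^{R2} p2 dp2` (with `0 ≤ R2 ≤ 2p1` and `0 < β < 1`)
is `b1 = p1` and `R2 = 2p1`. -/
theorem stmt_0 (p1 R1 β : ℝ) (hp1 : 0 < p1) (hβ0 : 0 < β) (hβ1 : β < 1)
    (b1 : ℝ → ℝ)
    (hb1 : ∀ R2, b1 R2 = (1 - R2 / (2 * p1)) * R2 + (1 / (2 * p1)) * ∫ p2 in (0:ℝ)..R2, p2)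
    (obj : ℝ → ℝ)
    (hobj : ∀ R2, obj R2 = -R1 + b1 R2 + (β / (2 * p1)) * ∫ p2 in R2..(2 * p1), (p2 - R2)) :
    (∀ R2, 0 ≤ R2 → R2 ≤ 2 * p1 → obj R2 ≤ obj (2 * p1)) ∧ b1 (2 * p1) = p1 := by
  have hint : ∀ a R2 : ℝ, (∫ p2 in a..(2*p1), (p2 - R2)) =
      ((2*p1)^2 - a^2)/2 - R2 * (2*p1 - a) := by
    intro a R2
    rw [intervalIntegral.integral_sub intervalIntegrable_id intervalIntegrable_const,
      integral_id, intervalIntegral.integral_const]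
    simp only [smul_eq_mul]; ring
  constructor
  · intro R2 h0 h2
    have key : obj (2*p1) - obj R2 = (1-β) * (2*p1 - R2)^2 / (4*p1) := by
      rw [hobj, hobj, hb1, hb1, integral_id, integral_id, hint, hint]
      field_simp
      ring
    have hnn : 0 ≤ (1-β) * (2*p1 - R2)^2 / (4*p1) := by
      apply div_nonneg _ (by positivity)
      have : 0 ≤ 1 - β := by linarith
      positivity
    linarith
  · rw [hb1, integral_id]
    field_simp
    ring
end

section
/- Let β ∈ (0,1), y > 0, p1 > 0, π1 ∈ [0,1]. The honest type's utility from keeping the asset and borrowing, U_b = (1+β)y - R1 + βp1 + (if π1 < β then (1-β)²p1/(1-π1) else (π1-β)y + (1-π1)p1), is weakly less than the utility from selling, U_s = (1+β)y - R1 + p1 + max{(π1-β)y, 0}; i.e., U_b ≤ U_s in both cases π1 < β and π1 ≥ β. -/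
/-- The honest type's utility from keeping the asset and borrowing is weakly less than
the utility from selling it, in both regimes `π1 < β` and `π1 ≥ β`. -/
theorem stmt_6 (β y p1 π1 R1 Ub Us : ℝ)
    (hβ0 : 0 < β) (hβ1 : β < 1) (hy : 0 < y) (hp1 : 0 < p1)
    (hπ0 : 0 ≤ π1) (hπ1 : π1 ≤ 1)
    (hUb : Ub = (1 + β) * y - R1 + β * p1 +
      (if π1 < β then (1 - β) ^ 2 * p1 / (1 - π1) else (π1 - β) * y + (1 - π1) * p1))
    (hUs : Us = (1 + β) * y - R1 + p1 + max ((π1 - β) * y) 0) :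
    Ub ≤ Us := by
  subst hUb hUs
  by_cases h : π1 < β
  · rw [if_pos h]
    have hmax : (0:ℝ) ≤ max ((π1 - β) * y) 0 := le_max_right _ _
    have hπβ : (0:ℝ) < 1 - π1 := by linarith
    have key : (1 - β) ^ 2 * p1 / (1 - π1) ≤ (1 - β) * p1 := by
      rw [div_le_iff₀ hπβ]
      nlinarith [mul_le_mul_of_nonneg_left (show (1-β) ≤ 1-π1 by linarith)
        (show 0 ≤ (1-β)*p1 by nlinarith), sq_nonneg (1-β)]
    nlinarith
  · rw [if_neg h]
    have hmax : (π1 - β) * y ≤ max ((π1 - β) * y) 0 := le_max_left _ _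
    nlinarith
end

section
/- Let x > 0, β ∈ (0,1), p1 > 0. The contract maximizing x - R1 + b1 + (β/(2p1))∫_{R2-x}^{2p1}(x + p2 - R2)dp2 subject to b1 = (1 - R2/(4p1))R2 + x²/(4p1), over R2 ∈ [x, 2p1 + x], is R2* = 2p1 - βx/(1-β) with b1* = p1 + ((1-2β)/p1)·(x/(2(1-β)))², provided p1 ≥ x/(2(1-β)); if p1 < x/(2(1-β)) the optimal choice is the riskless contract (b1, R2) = (x, x). -/
open MeasureTheory intervalIntegral

/-- Collateral-only benchmark with dividend `x`: the contract maximizing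
`x - R1 + b1(R2) + (β/(2p1))∫_{R2-x}^{2p1}(x + p2 - R2)dp2` subject to
`b1(R2) = (1 - R2/(4p1))R2 + x²/(4p1)`, over `R2 ∈ [x, 2p1 + x]`, is
`R2* = 2p1 - βx/(1-β)` with `b1* = p1 + ((1-2β)/p1)·(x/(2(1-β)))²`, provided
`p1 ≥ x/(2(1-β))`; if `p1 < x/(2(1-β))` the optimum is the riskless contract `(x, x)`. -/
theorem stmt_16 (x β p1 R1 : ℝ) (hx : 0 < x) (hβ0 : 0 < β) (hβ1 : β < 1) (hp1 : 0 < p1)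
    (b1 : ℝ → ℝ) (hb1 : ∀ R2, b1 R2 = (1 - R2 / (4 * p1)) * R2 + x ^ 2 / (4 * p1))
    (obj : ℝ → ℝ)
    (hobj : ∀ R2, obj R2 = x - R1 + b1 R2 +
      (β / (2 * p1)) * ∫ p2 in (R2 - x)..(2 * p1), (x + p2 - R2)) :
    (x / (2 * (1 - β)) ≤ p1 →
      (∀ R2, x ≤ R2 → R2 ≤ 2 * p1 + x → obj R2 ≤ obj (2 * p1 - β * x / (1 - β))) ∧
      b1 (2 * p1 - β * x / (1 - β)) = p1 + ((1 - 2 * β) / p1) * (x / (2 * (1 - β))) ^ 2) ∧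
    (p1 < x / (2 * (1 - β)) →
      (∀ R2, x ≤ R2 → R2 ≤ 2 * p1 + x → obj R2 ≤ obj x) ∧ b1 x = x) := by
  have h1β : (0:ℝ) < 1 - β := by linarith
  have h4p : (0:ℝ) < 4 * p1 := by linarith
  have hI : ∀ R2 : ℝ, (∫ p2 in (R2 - x)..(2 * p1), (x + p2 - R2))
      = (2 * p1 + x - R2) ^ 2 / 2 := by
    intro R2
    have h : (fun p2 : ℝ => x + p2 - R2) = fun p2 : ℝ => (x - R2) + p2 := by
      funext p2; ring
    rw [h, intervalIntegral.integral_add intervalIntegrable_const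
      intervalIntegral.intervalIntegrable_id, intervalIntegral.integral_const,
      integral_id]
    simp only [smul_eq_mul]
    ring
  have hobj' : ∀ R2 : ℝ, obj R2 = x - R1 + ((1 - R2 / (4 * p1)) * R2 + x ^ 2 / (4 * p1)) +
      (β / (2 * p1)) * ((2 * p1 + x - R2) ^ 2 / 2) := by
    intro R2; rw [hobj, hb1, hI]
  have e : ∀ S : ℝ, x - R1 + ((1 - S / (4 * p1)) * S + x ^ 2 / (4 * p1)) +
      β / (2 * p1) * ((2 * p1 + x - S) ^ 2 / 2)
      = x - R1 + x ^ 2 / (4 * p1)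
        + (- (1 - β) * S ^ 2 + (4 * p1 * (1 - β) - 2 * β * x) * S
           + β * (2 * p1 + x) ^ 2) / (4 * p1) := by
    intro S; field_simp; ring
  constructor
  · intro hcond
    constructor
    · intro R2 _ _
      set t : ℝ := β * x / (1 - β) with ht_def
      have ht : (1 - β) * t = β * x := by
        rw [ht_def]; field_simp
      have hvert : 2 * p1 - β * x / (1 - β) = 2 * p1 - t := rfl
      rw [hobj', hobj', hvert, e, e]
      have hnum : - (1 - β) * R2 ^ 2 + (4 * p1 * (1 - β) - 2 * β * x) * R2
          + β * (2 * p1 + x) ^ 2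
          ≤ - (1 - β) * (2 * p1 - t) ^ 2
            + (4 * p1 * (1 - β) - 2 * β * x) * (2 * p1 - t)
            + β * (2 * p1 + x) ^ 2 := by
        have hkey : (- (1 - β) * (2 * p1 - t) ^ 2
            + (4 * p1 * (1 - β) - 2 * β * x) * (2 * p1 - t) + β * (2 * p1 + x) ^ 2)
            - (- (1 - β) * R2 ^ 2 + (4 * p1 * (1 - β) - 2 * β * x) * R2
               + β * (2 * p1 + x) ^ 2)
            = (1 - β) * (R2 - (2 * p1 - t)) ^ 2 := by
          linear_combination (-2 * (R2 - (2 * p1 - t))) * ht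
        nlinarith [mul_nonneg h1β.le (sq_nonneg (R2 - (2 * p1 - t))), hkey]
      gcongr
    · rw [hb1]
      field_simp
      ring
  · intro hcond
    have hc : 2 * p1 * (1 - β) < x := by
      rw [lt_div_iff₀ (by linarith : (0:ℝ) < 2 * (1 - β))] at hcond
      nlinarith
    constructor
    · intro R2 hR2 _
      rw [hobj', hobj', e, e]
      have hbr : 0 ≤ (1 - β) * (R2 + x) - 4 * p1 * (1 - β) + 2 * β * x := by
        nlinarith [mul_nonneg h1β.le (sub_nonneg.2 hR2)]
      have hnum : - (1 - β) * R2 ^ 2 + (4 * p1 * (1 - β) - 2 * β * x) * R2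
          + β * (2 * p1 + x) ^ 2
          ≤ - (1 - β) * x ^ 2 + (4 * p1 * (1 - β) - 2 * β * x) * x
            + β * (2 * p1 + x) ^ 2 := by
        nlinarith [mul_nonneg (sub_nonneg.2 hR2) hbr]
      gcongr
    · rw [hb1]; field_simp; ring
end
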